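/- For every real number t > 0, the set { z : ℂ | t ≤ ∠ 1 0 z ∧ t ≤ ∠ 0 1 z ∧ t ≤ ∠ 0 z 1 } is compact, where ∠ a b c denotes the Euclidean angle at the vertex b of the triple (a, b, c) in ℂ regarded as a Euclidean plane. -/

import Mathlib

/-!
By the angle sum, the apex angle of a triangle `a b p` whose angles are all at least `t` lies in
`[t, π - 2t]`, so the law of sines gives `dist a p * sin t ≤ dist a b`. For closedness, a limit
point cannot be `a` or `b`, since there the angle at the other base vertex vanishes; away from
`a` and `b` all three angles are continuous.
-/

open EuclideanGeometry Real

theorem Real.sin_le_sin_of_le_of_le_pi_sub {x y : ℝ} (hx : -(π / 2) ≤ x) (hxy : x ≤ y)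
    (hy : y ≤ π - x) : sin x ≤ sin y := by
  rcases le_total y (π / 2) with hy' | hy'
  · exact sin_le_sin_of_le_of_le_pi_div_two hx hy' hxy
  · rw [← sin_pi_sub y]
    exact sin_le_sin_of_le_of_le_pi_div_two hx (by linarith) (by linarith)

theorem ContinuousAt.angle {X V P : Type*} [TopologicalSpace X] [NormedAddCommGroup V]
    [InnerProductSpace ℝ V] [MetricSpace P] [NormedAddTorsor V P] {f g h : X → P} {x : X}
    (hf : ContinuousAt f x) (hg : ContinuousAt g x) (hh : ContinuousAt h x)
    (hfg : f x ≠ g x) (hhg : h x ≠ g x) : ContinuousAt (fun y => ∠ (f y) (g y) (h y)) x :=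
  ContinuousAt.comp (f := fun y => (f y, g y, h y))
    (continuousAt_angle (x := (f x, g x, h x)) hfg hhg) (hf.prodMk (hg.prodMk hh))

namespace EuclideanGeometry

variable {V P : Type*} [NormedAddCommGroup V] [InnerProductSpace ℝ V] [MetricSpace P]
  [NormedAddTorsor V P] {t : ℝ} {a b p : P}

def apexesWithAnglesGE (t : ℝ) (a b : P) : Set P :=
  {p | t ≤ ∠ b a p ∧ t ≤ ∠ a b p ∧ t ≤ ∠ a p b}

theorem angle_le_pi_sub_two_mul_of_mem_apexesWithAnglesGE (hab : a ≠ b)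
    (hp : p ∈ apexesWithAnglesGE t a b) : ∠ a p b ≤ π - 2 * t := by
  have hsum := angle_add_angle_add_angle_eq_pi p hab.symm
  rw [angle_comm b p a, angle_comm p a b] at hsum
  linarith [hp.1, hp.2.1]

theorem dist_mul_sin_le_of_mem_apexesWithAnglesGE (hab : a ≠ b) (ht : 0 ≤ t)
    (hp : p ∈ apexesWithAnglesGE t a b) : dist a p * sin t ≤ dist a b := by
  have hsin : sin t ≤ sin (∠ a p b) :=
    sin_le_sin_of_le_of_le_pi_sub (by linarith [pi_pos]) hp.2.2
      (by linarith [angle_le_pi_sub_two_mul_of_mem_apexesWithAnglesGE hab hp])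
  calc dist a p * sin t ≤ dist a p * sin (∠ a p b) := by gcongr
    _ = sin (∠ a b p) * dist a b := by
      rw [mul_comm, angle_comm, dist_comm a p, law_sin b p a, dist_comm]
    _ ≤ dist a b := mul_le_of_le_one_left dist_nonneg (sin_le_one _)

theorem isBounded_apexesWithAnglesGE (hab : a ≠ b) (ht : 0 < t) :
    Bornology.IsBounded (apexesWithAnglesGE t a b) := by
  rcases (apexesWithAnglesGE t a b).eq_empty_or_nonempty with hempty | ⟨p₀, hp₀⟩
  · simp [hempty]
  have hsin : 0 < sin t := by
    refine sin_pos_of_pos_of_lt_pi ht ?_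
    linarith [hp₀.2.2, angle_le_pi_sub_two_mul_of_mem_apexesWithAnglesGE hab hp₀]
  refine (Metric.isBounded_closedBall (x := a) (r := dist a b / sin t)).subset fun p hp => ?_
  rw [Metric.mem_closedBall, dist_comm, le_div_iff₀ hsin]
  exact dist_mul_sin_le_of_mem_apexesWithAnglesGE hab ht.le hp

theorem isClosed_apexesWithAnglesGE (hab : a ≠ b) (ht : 0 < t) :
    IsClosed (apexesWithAnglesGE t a b) := by
  refine isClosed_of_closure_subset fun z hz => ?_
  have le_of_continuousAt {f : P → ℝ} (hf : ContinuousAt f z)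
      (hS : ∀ p ∈ apexesWithAnglesGE t a b, t ≤ f p) : t ≤ f z :=
    continuousWithinAt_const.closure_le hz hf.continuousWithinAt hS
  have hza : z ≠ a := by
    rintro rfl
    have := le_of_continuousAt (continuousAt_const.angle continuousAt_const continuousAt_id
      hab hab) fun p hp => hp.2.1
    rw [id_eq, angle_self_of_ne hab] at this
    linarith
  have hzb : z ≠ b := by
    rintro rfl
    have := le_of_continuousAt (continuousAt_const.angle continuousAt_const continuousAt_id
      hab.symm hab.symm) fun p hp => hp.1
    rw [id_eq, angle_self_of_ne hab.symm] at this
    linarith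
  exact ⟨le_of_continuousAt (continuousAt_const.angle continuousAt_const continuousAt_id
      hab.symm hza) fun p hp => hp.1,
    le_of_continuousAt (continuousAt_const.angle continuousAt_const continuousAt_id hab hzb)
      fun p hp => hp.2.1,
    le_of_continuousAt (continuousAt_const.angle continuousAt_id continuousAt_const hza.symm
      hzb.symm) fun p hp => hp.2.2⟩

theorem isCompact_apexesWithAnglesGE [ProperSpace P] (hab : a ≠ b) (ht : 0 < t) :
    IsCompact (apexesWithAnglesGE t a b) :=
  Metric.isCompact_of_isClosed_isBounded (isClosed_apexesWithAnglesGE hab ht)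
    (isBounded_apexesWithAnglesGE hab ht)

end EuclideanGeometry

theorem triangles_with_angles_bounded_below_compact (t : ℝ) (ht : 0 < t) :
    IsCompact { z : ℂ | t ≤ ∠ (1 : ℂ) 0 z ∧ t ≤ ∠ (0 : ℂ) 1 z ∧ t ≤ ∠ (0 : ℂ) z 1 } :=
  isCompact_apexesWithAnglesGE zero_ne_one ht
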